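/- If Φ satisfies RIP of order |I|+|J| with constant δ_{|I|+|J|}, where I and J are disjoint index sets, then for all q ∈ ℝ^{|I|}, p ∈ ℝ^{|J|}: ⟨Φ_I q, Φ_J p⟩ ≤ δ_{|I|+|J|} ‖p‖₂ ‖q‖₂. -/
import Mathlib


open Matrix BigOperators Finset

/-- squared Euclidean norm -/
noncomputable def n2sq {α : Type*} [Fintype α] (v : α → ℝ) : ℝ := ∑ i, (v i)^2

/-- Euclidean norm -/
noncomputable def n2 {α : Type*} [Fintype α] (v : α → ℝ) : ℝ := Real.sqrt (n2sq v)

/-- sup norm -/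
noncomputable def ninf {α : Type*} [Fintype α] (v : α → ℝ) : ℝ := ⨆ i, |v i|

/-- dot product -/
def dot {α : Type*} [Fintype α] (u v : α → ℝ) : ℝ := ∑ i, u i * v i

/-- column submatrix indexed by a finite index set -/
noncomputable def subCols {m n : ℕ} (Φ : Matrix (Fin m) (Fin n) ℝ) (I : Finset (Fin n)) :
    Matrix (Fin m) {j // j ∈ I} ℝ := Matrix.of fun i j => Φ i j.1

/-- restriction of a vector to an index set -/
def restrict {n : ℕ} (x : Fin n → ℝ) (I : Finset (Fin n)) : {j // j ∈ I} → ℝ :=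
  fun j => x j.1

/-- Moore–Penrose pseudoinverse (full column rank case) -/
noncomputable def pinv {m n : ℕ} (Φ : Matrix (Fin m) (Fin n) ℝ) (I : Finset (Fin n)) :
    Matrix {j // j ∈ I} (Fin m) ℝ :=
  ((subCols Φ I)ᵀ * subCols Φ I)⁻¹ * (subCols Φ I)ᵀ

/-- orthogonal projector onto the column span of `Φ_I` -/
noncomputable def proj {m n : ℕ} (Φ : Matrix (Fin m) (Fin n) ℝ) (I : Finset (Fin n)) :
    Matrix (Fin m) (Fin m) ℝ := subCols Φ I * pinv Φ I

/-- projector onto the orthogonal complement of the column span of `Φ_I` -/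
noncomputable def projPerp {m n : ℕ} (Φ : Matrix (Fin m) (Fin n) ℝ) (I : Finset (Fin n)) :
    Matrix (Fin m) (Fin m) ℝ := 1 - proj Φ I

/-- restricted isometry property of order `K` with constant `δ` -/
def RIP {m n : ℕ} (Φ : Matrix (Fin m) (Fin n) ℝ) (K : ℕ) (δ : ℝ) : Prop :=
  ∀ I : Finset (Fin n), I.card ≤ K → ∀ q : {j // j ∈ I} → ℝ,
    (1 - δ) * n2sq q ≤ n2sq ((subCols Φ I).mulVec q) ∧
    n2sq ((subCols Φ I).mulVec q) ≤ (1 + δ) * n2sq q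

lemma n2sq_nonneg' {α : Type*} [Fintype α] (v : α → ℝ) : 0 ≤ n2sq v :=
  Finset.sum_nonneg fun _ _ => sq_nonneg _

lemma mulVec_restrict' {m n : ℕ} (Φ : Matrix (Fin m) (Fin n) ℝ) (T : Finset (Fin n))
    (x : Fin n → ℝ) (i : Fin m) :
    (subCols Φ T).mulVec (_root_.restrict x T) i = ∑ j ∈ T, Φ i j * x j := by
  simp only [Matrix.mulVec, dotProduct, subCols, _root_.restrict, Matrix.of_apply]
  exact Finset.sum_coe_sort T fun j => Φ i j * x j

lemma n2sq_restrict' {n : ℕ} (x : Fin n → ℝ) (T : Finset (Fin n)) :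
    n2sq (_root_.restrict x T) = ∑ j ∈ T, (x j)^2 := by
  simp only [n2sq, _root_.restrict]
  exact Finset.sum_coe_sort T fun j => (x j)^2

lemma combo' {m n : ℕ} (Φ : Matrix (Fin m) (Fin n) ℝ) (I J : Finset (Fin n))
    (hIJ : Disjoint I J) (q : {j // j ∈ I} → ℝ) (p : {j // j ∈ J} → ℝ) :
    ∃ u : {j // j ∈ I ∪ J} → ℝ,
      ((subCols Φ (I ∪ J)).mulVec u =
        fun i => (subCols Φ I).mulVec q i + (subCols Φ J).mulVec p i) ∧
      n2sq u = n2sq q + n2sq p := by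
  classical
  set x : Fin n → ℝ := fun j =>
    if h : j ∈ I then q ⟨j, h⟩ else if h' : j ∈ J then p ⟨j, h'⟩ else 0 with hx
  have hxI : ∀ j (hj : j ∈ I), x j = q ⟨j, hj⟩ := fun j hj => by simp [hx, hj]
  have hxJ : ∀ j (hj : j ∈ J), x j = p ⟨j, hj⟩ := fun j hj => by
    have hnI : j ∉ I := Finset.disjoint_right.mp hIJ hj
    simp [hx, hnI, hj]
  have hrI : _root_.restrict x I = q := by
    funext j; exact hxI j.1 j.2
  have hrJ : _root_.restrict x J = p := by
    funext j; exact hxJ j.1 j.2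
  refine ⟨_root_.restrict x (I ∪ J), ?_, ?_⟩
  · funext i
    rw [mulVec_restrict', Finset.sum_union hIJ, ← hrI, ← hrJ,
      mulVec_restrict', mulVec_restrict']
  · rw [n2sq_restrict', Finset.sum_union hIJ, ← hrI, ← hrJ,
      n2sq_restrict', n2sq_restrict']

lemma core' {m n : ℕ} (Φ : Matrix (Fin m) (Fin n) ℝ)
    (I J : Finset (Fin n)) (hIJ : Disjoint I J) (δ : ℝ)
    (h : RIP Φ (I.card + J.card) δ)
    (q : {j // j ∈ I} → ℝ) (p : {j // j ∈ J} → ℝ) :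
    dot ((subCols Φ I).mulVec q) ((subCols Φ J).mulVec p) ≤
      δ / 2 * (n2sq q + n2sq p) := by
  classical
  set a := (subCols Φ I).mulVec q with ha
  set b := (subCols Φ J).mulVec p with hb
  have hcard : (I ∪ J).card ≤ I.card + J.card := by
    rw [Finset.card_union_of_disjoint hIJ]
  obtain ⟨u, hu1, hu2⟩ := combo' Φ I J hIJ q p
  obtain ⟨v, hv1, hv2⟩ := combo' Φ I J hIJ q (-p)
  have hbneg : (subCols Φ J).mulVec (-p) = -b := by
    rw [hb]; exact Matrix.mulVec_neg _ _
  have hn2p : n2sq (-p) = n2sq p := by simp [n2sq]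
  have hup := (h (I ∪ J) hcard u).2
  have hdown := (h (I ∪ J) hcard v).1
  rw [hu1, hu2] at hup
  rw [hv1, hv2, hn2p, hbneg] at hdown
  have hpol : n2sq (fun i => a i + b i) - n2sq (fun i => a i + (-b) i)
      = 4 * dot a b := by
    simp only [n2sq, dot, Pi.neg_apply, ← Finset.sum_sub_distrib, Finset.mul_sum]
    exact Finset.sum_congr rfl fun i _ => by ring
  linarith [hup, hdown, hpol]

lemma n2sq_smul' {α : Type*} [Fintype α] (c : ℝ) (v : α → ℝ) :
    n2sq (c • v) = c^2 * n2sq v := by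
  simp only [n2sq, Pi.smul_apply, smul_eq_mul, Finset.mul_sum]
  exact Finset.sum_congr rfl fun i _ => by ring

lemma n2sq_zero_eq {α : Type*} [Fintype α] {v : α → ℝ} (hv : n2sq v = 0) : v = 0 := by
  funext i
  have h0 := (Finset.sum_eq_zero_iff_of_nonneg
    (fun i _ => sq_nonneg (v i))).mp hv i (Finset.mem_univ i)
  exact pow_eq_zero_iff (two_ne_zero) |>.mp h0


/-- disjoint-support inner product bound:
`⟨Φ_I q, Φ_J p⟩ ≤ δ_{|I|+|J|}‖p‖₂‖q‖₂`. -/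
theorem rip_inner_product_bound {m n : ℕ} (Φ : Matrix (Fin m) (Fin n) ℝ)
    (I J : Finset (Fin n)) (hIJ : Disjoint I J) (δ : ℝ) (hδ : δ ∈ Set.Ioo (0:ℝ) 1)
    (h : RIP Φ (I.card + J.card) δ)
    (q : {j // j ∈ I} → ℝ) (p : {j // j ∈ J} → ℝ) :
    dot ((subCols Φ I).mulVec q) ((subCols Φ J).mulVec p) ≤ δ * n2 p * n2 q := by
  classical
  obtain ⟨hδ0, hδ1⟩ := hδ
  by_cases hQ : n2sq q = 0
  · have hq0 : q = 0 := n2sq_zero_eq hQ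
    have : n2 q = 0 := by rw [n2, hQ, Real.sqrt_zero]
    rw [this, hq0]
    simp [dot, Matrix.mulVec_zero]
  by_cases hP : n2sq p = 0
  · have hp0 : p = 0 := n2sq_zero_eq hP
    have : n2 p = 0 := by rw [n2, hP, Real.sqrt_zero]
    rw [this, hp0]
    simp [dot, Matrix.mulVec_zero]
  have hQpos : 0 < n2sq q := lt_of_le_of_ne (n2sq_nonneg' q) (Ne.symm hQ)
  have hPpos : 0 < n2sq p := lt_of_le_of_ne (n2sq_nonneg' p) (Ne.symm hP)
  set sq := Real.sqrt (n2sq q) with hsqdef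
  set sp := Real.sqrt (n2sq p) with hspdef
  have hsq : 0 < sq := Real.sqrt_pos.mpr hQpos
  have hsp : 0 < sp := Real.sqrt_pos.mpr hPpos
  have hsq2 : sq^2 = n2sq q := Real.sq_sqrt (n2sq_nonneg' q)
  have hsp2 : sp^2 = n2sq p := Real.sq_sqrt (n2sq_nonneg' p)
  have hc := core' Φ I J hIJ δ h (sq⁻¹ • q) (sp⁻¹ • p)
  rw [Matrix.mulVec_smul, Matrix.mulVec_smul, n2sq_smul', n2sq_smul'] at hc
  set a := (subCols Φ I).mulVec q with ha
  set b := (subCols Φ J).mulVec p with hb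
  have hdot : dot (sq⁻¹ • a) (sp⁻¹ • b) = sq⁻¹ * sp⁻¹ * dot a b := by
    simp only [dot, Pi.smul_apply, smul_eq_mul, Finset.mul_sum]
    exact Finset.sum_congr rfl fun i _ => by ring
  have hq1 : (sq⁻¹)^2 * n2sq q = 1 := by
    rw [← hsq2]; field_simp
  have hp1 : (sp⁻¹)^2 * n2sq p = 1 := by
    rw [← hsp2]; field_simp
  rw [hdot, hq1, hp1] at hc
  have key : sq * sp * (sq⁻¹ * sp⁻¹ * dot a b) = dot a b := by
    field_simp
  have hmul := mul_le_mul_of_nonneg_left hc (le_of_lt (mul_pos hsq hsp))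
  rw [key] at hmul
  have : n2 p = sp := rfl
  have : n2 q = sq := rfl
  calc dot a b ≤ sq * sp * (δ / 2 * (1 + 1)) := hmul
    _ = δ * sp * sq := by ring
    _ = δ * n2 p * n2 q := rfl
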